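/- arXiv:2304.10024 — 2 statements merged into one kernel-verified Lean document; each statement's English description precedes it below -/
import Mathlib

section
/- If u : ℝ → ℝ is bounded, measurable, and nonnegative, and v = K_d * u (convolution), then v twice differentiable with -d v'' = u - v pointwise wherever u is continuous. -/
open Real MeasureTheory

noncomputable def Kd (d x : ℝ) : ℝ := (1 / (2 * Real.sqrt d)) * Real.exp (-|x| / Real.sqrt d)

/-!
With `c = 1/√d`, splitting the kernel at `y = x` writes `v = (c/2) (L + R)`, where
`L x = ∫_{y ≤ x} e^{c(y-x)} u y` and `R x = ∫_{y > x} e^{c(x-y)} u y`. The fundamental theorem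
of calculus gives `L' = u - c L` and `R' = c R - u`, hence `v' = (c²/2) (R - L)` and
`v'' = (c²/2) (c (L + R) - 2u) = c² (v - u)`.
-/

open Set

section OneSidedIntegrals

variable {E : Type*} [NormedAddCommGroup E] [NormedSpace ℝ E] [CompleteSpace E] {f : ℝ → E}

theorem hasDerivAt_setIntegral_Iic (hf : Continuous f) (hint : ∀ a, IntegrableOn f (Iic a))
    (x : ℝ) : HasDerivAt (fun t => ∫ y in Iic t, f y) (f x) x := by
  have h_eq : (fun t => ∫ y in Iic t, f y) = fun t => (∫ y in Iic 0, f y) + ∫ y in 0..t, f y := by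
    ext t
    rw [← intervalIntegral.integral_Iic_sub_Iic (hint 0) (hint t), add_sub_cancel]
  rw [h_eq]
  exact ((hf.integral_hasStrictDerivAt 0 x).hasDerivAt).const_add _

theorem hasDerivAt_setIntegral_Ioi (hf : Continuous f) (hint : ∀ a, IntegrableOn f (Ioi a))
    (x : ℝ) : HasDerivAt (fun t => ∫ y in Ioi t, f y) (-f x) x := by
  have h_eq : (fun t => ∫ y in Ioi t, f y) = fun t => (∫ y in Ioi 0, f y) - ∫ y in 0..t, f y := by
    ext t
    rw [← intervalIntegral.integral_Ioi_sub_Ioi' (hint 0) (hint t), sub_sub_cancel]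
  rw [h_eq]
  exact ((hf.integral_hasStrictDerivAt 0 x).hasDerivAt).const_sub _

end OneSidedIntegrals

section ExpConvolution

variable {c M : ℝ} {u : ℝ → ℝ}

theorem integrableOn_exp_mul_mul_Iic (hc : 0 < c) (hM : ∀ y, |u y| ≤ M)
    (hu : AEStronglyMeasurable u) (a : ℝ) :
    IntegrableOn (fun y => exp (c * y) * u y) (Iic a) := by
  simpa only [IntegrableOn, mul_comm (exp _)] using
    (integrableOn_exp_mul_Iic hc a).bdd_mul hu.restrict (c := M)
      (ae_of_all _ fun y => (Real.norm_eq_abs _).trans_le (hM y))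

theorem integrableOn_exp_neg_mul_mul_Ioi (hc : 0 < c) (hM : ∀ y, |u y| ≤ M)
    (hu : AEStronglyMeasurable u) (a : ℝ) :
    IntegrableOn (fun y => exp (-c * y) * u y) (Ioi a) := by
  simpa only [IntegrableOn, mul_comm (exp _)] using
    (exp_neg_integrableOn_Ioi a hc).bdd_mul hu.restrict (c := M)
      (ae_of_all _ fun y => (Real.norm_eq_abs _).trans_le (hM y))

noncomputable def expConvLeft (c : ℝ) (u : ℝ → ℝ) (x : ℝ) : ℝ :=
  ∫ y in Iic x, exp (c * (y - x)) * u y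

noncomputable def expConvRight (c : ℝ) (u : ℝ → ℝ) (x : ℝ) : ℝ :=
  ∫ y in Ioi x, exp (c * (x - y)) * u y

theorem expConvLeft_eq (c : ℝ) (u : ℝ → ℝ) :
    expConvLeft c u = fun x => exp (-c * x) * ∫ y in Iic x, exp (c * y) * u y := by
  ext x
  rw [expConvLeft, ← integral_const_mul]
  congr 1 with y
  rw [← mul_assoc, ← exp_add]
  ring_nf

theorem expConvRight_eq (c : ℝ) (u : ℝ → ℝ) :
    expConvRight c u = fun x => exp (c * x) * ∫ y in Ioi x, exp (-c * y) * u y := by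
  ext x
  rw [expConvRight, ← integral_const_mul]
  congr 1 with y
  rw [← mul_assoc, ← exp_add]
  ring_nf

theorem hasDerivAt_expConvLeft (hc : 0 < c) (hM : ∀ y, |u y| ≤ M) (hu : Continuous u) (x : ℝ) :
    HasDerivAt (expConvLeft c u) (u x - c * expConvLeft c u x) x := by
  have h_exp : HasDerivAt (fun t => exp (-c * t)) (-c * exp (-c * x)) x := by
    simpa [mul_comm] using ((hasDerivAt_id x).const_mul (-c)).exp
  have h_int := hasDerivAt_setIntegral_Iic (by fun_prop)
    (integrableOn_exp_mul_mul_Iic hc hM hu.aestronglyMeasurable) x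
  rw [expConvLeft_eq]
  refine (h_exp.mul h_int).congr_deriv ?_
  rw [← mul_assoc, ← exp_add]
  ring_nf
  simp

theorem hasDerivAt_expConvRight (hc : 0 < c) (hM : ∀ y, |u y| ≤ M) (hu : Continuous u) (x : ℝ) :
    HasDerivAt (expConvRight c u) (c * expConvRight c u x - u x) x := by
  have h_exp : HasDerivAt (fun t => exp (c * t)) (c * exp (c * x)) x := by
    simpa [mul_comm] using ((hasDerivAt_id x).const_mul c).exp
  have h_int := hasDerivAt_setIntegral_Ioi (by fun_prop)
    (integrableOn_exp_neg_mul_mul_Ioi hc hM hu.aestronglyMeasurable) x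
  rw [expConvRight_eq]
  refine (h_exp.mul h_int).congr_deriv ?_
  rw [mul_neg, ← mul_assoc, ← exp_add]
  ring_nf
  simp

theorem integral_exp_neg_mul_abs_sub_mul (hc : 0 < c) (hM : ∀ y, |u y| ≤ M)
    (hu : AEStronglyMeasurable u) (x : ℝ) :
    ∫ y, exp (-(c * |x - y|)) * u y = expConvLeft c u x + expConvRight c u x := by
  have h_left : EqOn (fun y => exp (-c * x) * (exp (c * y) * u y))
      (fun y => exp (-(c * |x - y|)) * u y) (Iic x) := by
    intro y (hy : y ≤ x)
    dsimp only
    rw [abs_of_nonneg (sub_nonneg.2 hy), ← mul_assoc, ← exp_add]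
    ring_nf
  have h_right : EqOn (fun y => exp (c * x) * (exp (-c * y) * u y))
      (fun y => exp (-(c * |x - y|)) * u y) (Ioi x) := by
    intro y (hy : x < y)
    dsimp only
    rw [abs_of_neg (sub_neg.2 hy), ← mul_assoc, ← exp_add]
    ring_nf
  rw [← intervalIntegral.integral_Iic_add_Ioi
      (IntegrableOn.congr_fun ((integrableOn_exp_mul_mul_Iic hc hM hu x).const_mul _)
        h_left measurableSet_Iic)
      (IntegrableOn.congr_fun ((integrableOn_exp_neg_mul_mul_Ioi hc hM hu x).const_mul _)
        h_right measurableSet_Ioi),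
    ← setIntegral_congr_fun measurableSet_Iic h_left,
    ← setIntegral_congr_fun measurableSet_Ioi h_right,
    integral_const_mul, integral_const_mul, expConvLeft_eq, expConvRight_eq]

end ExpConvolution

theorem Kd_eq (d z : ℝ) : Kd d z = (√d)⁻¹ / 2 * exp (-((√d)⁻¹ * |z|)) := by
  rw [Kd]
  ring_nf

theorem conv_solves_ode_general (d : ℝ) (hd : 0 < d) (u : ℝ → ℝ)
    (hu_bdd : ∃ M, ∀ x, |u x| ≤ M) (hu_cont : Continuous u)
    (v : ℝ → ℝ) (hv : ∀ x, v x = ∫ y : ℝ, Kd d (x - y) * u y) :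
    ∃ v' v'' : ℝ → ℝ,
      (∀ x, HasDerivAt v (v' x) x) ∧
      (∀ x, HasDerivAt v' (v'' x) x) ∧
      (∀ x, -(d * v'' x) = u x - v x) := by
  obtain ⟨M, hM⟩ := hu_bdd
  set c := (√d)⁻¹ with hc_def
  have hc : 0 < c := by positivity
  have hc_sq : c ^ 2 = d⁻¹ := by rw [inv_pow, sq_sqrt hd.le]
  have hL := hasDerivAt_expConvLeft hc hM hu_cont
  have hR := hasDerivAt_expConvRight hc hM hu_cont
  have hv_eq : v = fun x => c / 2 * (expConvLeft c u x + expConvRight c u x) := by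
    ext x
    rw [hv, ← integral_exp_neg_mul_abs_sub_mul hc hM hu_cont.aestronglyMeasurable,
      ← integral_const_mul]
    simp only [Kd_eq, ← hc_def, mul_assoc]
  refine ⟨fun x => c ^ 2 / 2 * (expConvRight c u x - expConvLeft c u x), fun x => (v x - u x) / d,
    fun x => ?_, fun x => ?_, fun x => ?_⟩
  · rw [hv_eq]
    exact (((hL x).add (hR x)).const_mul (c / 2)).congr_deriv (by ring)
  · refine (((hR x).sub (hL x)).const_mul (c ^ 2 / 2)).congr_deriv ?_
    simp only [hv_eq, div_eq_mul_inv _ d, ← hc_sq]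
    ring
  · field_simp
    ring

theorem conv_solves_ode (d : ℝ) (hd : 0 < d) (u : ℝ → ℝ)
    (hu_bdd : ∃ M, ∀ x, |u x| ≤ M) (hu_cont : Continuous u) (hu_nonneg : ∀ x, 0 ≤ u x)
    (v : ℝ → ℝ) (hv : ∀ x, v x = ∫ y : ℝ, Kd d (x - y) * u y) :
    ∃ v' v'' : ℝ → ℝ,
      (∀ x, HasDerivAt v (v' x) x) ∧
      (∀ x, HasDerivAt v' (v'' x) x) ∧
      (∀ x, -(d * v'' x) = u x - v x) :=
  conv_solves_ode_general d hd u hu_bdd hu_cont v hv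
end

section
/- Let (c, U, V) solve the slab problem with U ≥ 0, and suppose a > ln(1/θ) where θ = max_{x∈[0,a]} U(x) > 0. Then c ≤ 2 + (χ/√d + χ/d) ‖V‖_{L^∞}. (In particular, at a first-touching point x₀ ∈ (-a,a) of U with α(x) = A₀e^{-x}, one has U(x₀)=α(x₀), U'(x₀)=-α(x₀), U''(x₀) ≤ α(x₀), and substituting into the equation yields the speed bound.) -/
open Real MeasureTheory

/-!
Let `p` maximise `U x * eˣ` on `[-a, a]`, i.e. the first point where `U` touches a curve
`A₀ e^{-x}` from below. It is interior: at `-a` the product is `e^{-a} < θ`, at `a` it is `0`,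
and at the point of `[0, a]` where `U = θ` it is at least `θ`. There `U'(p) = -U(p)`.
By the equation, `g = -c U + τχ U V' - U' + U(p) e^{p-x}` has `g' = U(1-U) - U(p) e^{p-x} ≤ 0`
on `[p, a)`, so `g ξ ≤ g p`. Letting `ξ → a` along points where `U'(ξ) ≤ 0` (they exist by the
mean value theorem, as `U ≥ 0 = U(a)`) gives `(c - 2 - τχ V'(p)) U(p) ≤ 0`, hence
`c ≤ 2 + χ ‖V'‖∞ ≤ 2 + χ ‖V‖∞ / √d`.

For `g'` to be the derivative one needs `V'` differentiable: splitting the convolution at `x`,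
`V = (e^{-x/√d} A + e^{x/√d} B) / (2√d)` with `A, B` one-sided integrals of `e^{±y/√d} Ũ(y)`.
-/

open Set Filter Topology

section OneSidedIntegrals

variable {f : ℝ → ℝ}

theorem hasDerivAt_integral_Iic (hf : Continuous f) (hint : ∀ z, IntegrableOn f (Iic z))
    (x : ℝ) : HasDerivAt (fun z => ∫ y in Iic z, f y) (f x) x := by
  have hsplit : (fun z => ∫ y in Iic z, f y) = fun z => (∫ y in Iic 0, f y) + ∫ y in 0..z, f y := by
    funext z
    rw [← intervalIntegral.integral_Iic_sub_Iic (hint 0) (hint z), add_sub_cancel]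
  rw [hsplit]
  exact (hf.integral_hasStrictDerivAt 0 x).hasDerivAt.const_add _

theorem hasDerivAt_integral_Ioi (hf : Continuous f) (hint : ∀ z, IntegrableOn f (Ioi z))
    (x : ℝ) : HasDerivAt (fun z => ∫ y in Ioi z, f y) (-f x) x := by
  have hsplit : (fun z => ∫ y in Ioi z, f y) = fun z => (∫ y in Ioi 0, f y) - ∫ y in 0..z, f y := by
    funext z
    rw [← intervalIntegral.integral_Ioi_sub_Ioi' (hint 0) (hint z), sub_sub_cancel]
  rw [hsplit]
  exact (hf.integral_hasStrictDerivAt 0 x).hasDerivAt.const_sub _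

end OneSidedIntegrals

section ExponentialKernel

variable {d : ℝ} {f : ℝ → ℝ}

theorem Kd_sub_of_le {x y : ℝ} (h : y ≤ x) :
    Kd d (x - y) = exp (-(√d)⁻¹ * x) / (2 * √d) * exp ((√d)⁻¹ * y) := by
  rw [Kd, abs_of_nonneg (sub_nonneg.2 h), div_mul_eq_mul_div (exp _) _ (exp _), ← exp_add]
  ring_nf

theorem Kd_sub_of_lt {x y : ℝ} (h : x < y) :
    Kd d (x - y) = exp ((√d)⁻¹ * x) / (2 * √d) * exp (-(√d)⁻¹ * y) := by
  rw [Kd, abs_of_neg (sub_neg.2 h), div_mul_eq_mul_div (exp _) _ (exp _), ← exp_add]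
  ring_nf

theorem integral_Kd_mul_eq (hd : 0 < d) (hf : Continuous f) {C : ℝ} (hC : ∀ y, ‖f y‖ ≤ C)
    (x : ℝ) :
    ∫ y, Kd d (x - y) * f y =
      exp (-(√d)⁻¹ * x) / (2 * √d) * (∫ y in Iic x, exp ((√d)⁻¹ * y) * f y) +
      exp ((√d)⁻¹ * x) / (2 * √d) * ∫ y in Ioi x, exp (-(√d)⁻¹ * y) * f y := by
  have hk : 0 < (√d)⁻¹ := inv_pos.2 (sqrt_pos.2 hd)
  have hleft : EqOn (fun y => Kd d (x - y) * f y)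
      (fun y => exp (-(√d)⁻¹ * x) / (2 * √d) * (exp ((√d)⁻¹ * y) * f y)) (Iic x) :=
    fun y hy => by simp only [Kd_sub_of_le (mem_Iic.1 hy), mul_assoc]
  have hright : EqOn (fun y => Kd d (x - y) * f y)
      (fun y => exp ((√d)⁻¹ * x) / (2 * √d) * (exp (-(√d)⁻¹ * y) * f y)) (Ioi x) :=
    fun y hy => by simp only [Kd_sub_of_lt (mem_Ioi.1 hy), mul_assoc]
  have hintl : IntegrableOn (fun y => exp ((√d)⁻¹ * y) * f y) (Iic x) :=
    (integrableOn_exp_mul_Iic hk x).mul_bdd hf.aestronglyMeasurable (ae_of_all _ hC)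
  have hintr : IntegrableOn (fun y => exp (-(√d)⁻¹ * y) * f y) (Ioi x) :=
    (integrableOn_exp_mul_Ioi (neg_neg_of_pos hk) x).mul_bdd hf.aestronglyMeasurable
      (ae_of_all _ hC)
  rw [← intervalIntegral.integral_Iic_add_Ioi
      (IntegrableOn.congr_fun (hintl.const_mul _) hleft.symm measurableSet_Iic)
      (IntegrableOn.congr_fun (hintr.const_mul _) hright.symm measurableSet_Ioi),
    setIntegral_congr_fun measurableSet_Iic hleft, setIntegral_congr_fun measurableSet_Ioi hright,
    integral_const_mul, integral_const_mul]

theorem differentiable_deriv_integral_Kd_mul (hd : 0 < d) (hf : Continuous f) {C : ℝ}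
    (hC : ∀ y, ‖f y‖ ≤ C) : Differentiable ℝ (deriv fun x => ∫ y, Kd d (x - y) * f y) := by
  set k := (√d)⁻¹
  have hk : 0 < k := inv_pos.2 (sqrt_pos.2 hd)
  set A := fun x => ∫ y in Iic x, exp (k * y) * f y
  set B := fun x => ∫ y in Ioi x, exp (-k * y) * f y
  have hA : ∀ x, HasDerivAt A (exp (k * x) * f x) x :=
    hasDerivAt_integral_Iic (by fun_prop) fun z =>
      (integrableOn_exp_mul_Iic hk z).mul_bdd hf.aestronglyMeasurable (ae_of_all _ hC)
  have hB : ∀ x, HasDerivAt B (-(exp (-k * x) * f x)) x :=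
    hasDerivAt_integral_Ioi (by fun_prop) fun z =>
      (integrableOn_exp_mul_Ioi (neg_neg_of_pos hk) z).mul_bdd hf.aestronglyMeasurable
        (ae_of_all _ hC)
  have hexp : ∀ r x,
      HasDerivAt (fun x => exp (r * x) / (2 * √d)) (r * (exp (r * x) / (2 * √d))) x :=
    fun r x => (((hasDerivAt_id x).const_mul r).exp.div_const (2 * √d)).congr_deriv (by
      simp only [id, mul_one]; ring)
  -- the terms `± e^{∓kx} e^{±kx} f x` coming from `A'` and `B'` cancel
  have hV : ∀ x, HasDerivAt (fun x => ∫ y, Kd d (x - y) * f y)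
      (k * (exp (k * x) / (2 * √d) * B x - exp (-k * x) / (2 * √d) * A x)) x := by
    intro x
    rw [funext (integral_Kd_mul_eq hd hf hC)]
    exact (((hexp (-k) x).mul (hA x)).add ((hexp k x).mul (hB x))).congr_deriv (by ring)
  have hAd : Differentiable ℝ A := fun x => (hA x).differentiableAt
  have hBd : Differentiable ℝ B := fun x => (hB x).differentiableAt
  rw [funext fun x => (hV x).deriv]
  fun_prop

end ExponentialKernel

theorem ContDiffOn.differentiableAt_deriv {U : ℝ → ℝ} {s : Set ℝ} {x : ℝ}
    (hU : ContDiffOn ℝ 2 U s) (hx : s ∈ 𝓝 x) : DifferentiableAt ℝ (deriv U) x := by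
  have hx' : x ∈ interior s := mem_interior_iff_mem_nhds.2 hx
  exact (((hU.mono interior_subset).deriv_of_isOpen (m := 1) isOpen_interior
    (by norm_num)).differentiableOn one_ne_zero x hx').differentiableAt
    (isOpen_interior.mem_nhds hx')

section Comparison

theorem exists_isMaxOn_mem_Ioo {g : ℝ → ℝ} {b a x₀ : ℝ} (hg : ContinuousOn g (Icc b a))
    (hx₀ : x₀ ∈ Icc b a) (hb : g b < g x₀) (ha : g a < g x₀) :
    ∃ p ∈ Ioo b a, IsMaxOn g (Icc b a) p := by
  obtain ⟨p, hp, hmax⟩ := isCompact_Icc.exists_isMaxOn ⟨x₀, hx₀⟩ hg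
  refine ⟨p, ⟨lt_of_le_of_ne hp.1 ?_, lt_of_le_of_ne hp.2 ?_⟩, hmax⟩
  · rintro rfl
    exact absurd (hmax hx₀) (not_le.2 hb)
  · rintro rfl
    exact absurd (hmax hx₀) (not_le.2 ha)

theorem exists_touching_point {U : ℝ → ℝ} {b a x₀ : ℝ} (hU : ContinuousOn U (Icc b a))
    (hb : U b = 1) (ha : U a = 0) (hx₀ : x₀ ∈ Icc b a) (hx₀b : exp b < U x₀ * exp x₀) :
    ∃ p ∈ Ioo b a, 0 < U p ∧ IsMaxOn (fun x => U x * exp x) (Icc b a) p := by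
  obtain ⟨p, hp, hmax⟩ := exists_isMaxOn_mem_Ioo (g := fun x => U x * exp x)
    (hU.mul continuous_exp.continuousOn) hx₀ (by simpa only [hb, one_mul])
    (by simp only [ha, zero_mul]; linarith [exp_pos b])
  refine ⟨p, hp, (mul_pos_iff_of_pos_right (exp_pos p)).1 ?_, hmax⟩
  linarith [exp_pos b, isMaxOn_iff.1 hmax x₀ hx₀]

theorem deriv_eq_neg_of_isLocalMax_mul_exp {U : ℝ → ℝ} {p u' : ℝ}
    (hmax : IsLocalMax (fun x => U x * exp x) p) (hU : HasDerivAt U u' p) : u' = -U p := by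
  have h := hmax.hasDerivAt_eq_zero (hU.mul (hasDerivAt_exp p))
  have h' : (u' + U p) * exp p = 0 := by rw [← h]; ring
  linarith [(mul_eq_zero.1 h').resolve_right (exp_pos p).ne']

theorem antitoneOn_comparison {U W : ℝ → ℝ} {c κ A p q : ℝ}
    (hU : ∀ x ∈ Icc p q, DifferentiableAt ℝ U x)
    (hU' : ∀ x ∈ Icc p q, DifferentiableAt ℝ (deriv U) x)
    (hW : ∀ x ∈ Icc p q, DifferentiableAt ℝ W x)
    (heq : ∀ x ∈ Icc p q, -(c * deriv U x) + κ * deriv (fun y => U y * W y) x =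
      deriv (deriv U) x + U x * (1 - U x))
    (hle : ∀ x ∈ Icc p q, U x * exp x ≤ A * exp p) :
    AntitoneOn (fun x => -(c * U x) + κ * (U x * W x) - deriv U x + A * exp (p - x))
      (Icc p q) := by
  have hderiv : ∀ x ∈ Icc p q,
      HasDerivAt (fun x => -(c * U x) + κ * (U x * W x) - deriv U x + A * exp (p - x))
        (U x * (1 - U x) - A * exp (p - x)) x := by
    intro x hx
    have hexp : HasDerivAt (fun x => A * exp (p - x)) (-(A * exp (p - x))) x :=
      (((hasDerivAt_id x).const_sub p).exp.const_mul A).congr_deriv (by simp)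
    have hUW : HasDerivAt (fun y => U y * W y) (deriv U x * W x + U x * deriv W x) x :=
      (hU x hx).hasDerivAt.mul (hW x hx).hasDerivAt
    have hx' := heq x hx
    rw [hUW.deriv] at hx'
    exact (((((hU x hx).hasDerivAt.const_mul c).neg.add (hUW.const_mul κ)).sub
      (hU' x hx).hasDerivAt).add hexp).congr_deriv (by linarith)
  refine antitoneOn_of_hasDerivWithinAt_nonpos (convex_Icc p q)
    (fun x hx => (hderiv x hx).continuousAt.continuousWithinAt)
    (fun x hx => (hderiv x (interior_subset hx)).hasDerivWithinAt) fun x hx => ?_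
  replace hx := interior_subset hx
  have hUx : U x ≤ A * exp (p - x) := by
    rw [exp_sub, ← mul_div_assoc, le_div_iff₀ (exp_pos x)]
    exact hle x hx
  linarith [mul_self_nonneg (U x)]

theorem frequently_deriv_nonpos_nhdsLT {f : ℝ → ℝ} {p a : ℝ} (hpa : p < a)
    (hf : ContinuousOn f (Icc p a)) (hdiff : DifferentiableOn ℝ f (Ioo p a))
    (hnonneg : ∀ x ∈ Icc p a, 0 ≤ f x) (ha : f a = 0) : ∃ᶠ x in 𝓝[<] a, deriv f x ≤ 0 := by
  rw [frequently_iff]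
  intro s hs
  obtain ⟨l, hl, hls⟩ := (mem_nhdsLT_iff_exists_Ioo_subset' hpa).1 hs
  have hb : max l p ∈ Ico p a := ⟨le_max_right _ _, max_lt hl hpa⟩
  obtain ⟨ξ, hξ, hslope⟩ := exists_deriv_eq_slope f hb.2
    (hf.mono (Icc_subset_Icc_left hb.1)) (hdiff.mono (Ioo_subset_Ioo_left hb.1))
  refine ⟨ξ, hls (Ioo_subset_Ioo_left (le_max_left _ _) hξ), ?_⟩
  rw [hslope, ha, zero_sub]
  exact div_nonpos_of_nonpos_of_nonneg (neg_nonpos.2 (hnonneg _ (Ico_subset_Icc_self hb)))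
    (sub_nonneg.2 hb.2.le)

theorem speed_le_of_touching {U W : ℝ → ℝ} {c κ M p a : ℝ} (hpa : p < a) (hκ : 0 ≤ κ)
    (hU : ∀ x ∈ Ico p a, DifferentiableAt ℝ U x)
    (hU' : ∀ x ∈ Ico p a, DifferentiableAt ℝ (deriv U) x)
    (hW : ∀ x ∈ Ico p a, DifferentiableAt ℝ W x) (hWM : ∀ x ∈ Ico p a, |W x| ≤ M)
    (heq : ∀ x ∈ Ico p a, -(c * deriv U x) + κ * deriv (fun y => U y * W y) x =
      deriv (deriv U) x + U x * (1 - U x))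
    (hUc : ContinuousOn U (Icc p a)) (hnonneg : ∀ x ∈ Icc p a, 0 ≤ U x) (hUa : U a = 0)
    (hpos : 0 < U p) (hslope : deriv U p = -U p)
    (hle : ∀ x ∈ Ico p a, U x * exp x ≤ U p * exp p) :
    c ≤ 2 + κ * M := by
  have hkey : ∀ ξ ∈ Ioo p a, (c - 2 - κ * W p) * U p ≤ (|c| + κ * M) * U ξ + deriv U ξ := by
    intro ξ hξ
    have hsub : Icc p ξ ⊆ Ico p a := Icc_subset_Ico_right hξ.2
    have hg := antitoneOn_comparison (fun x hx => hU x (hsub hx)) (fun x hx => hU' x (hsub hx))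
      (fun x hx => hW x (hsub hx)) (fun x hx => heq x (hsub hx)) (fun x hx => hle x (hsub hx))
      (left_mem_Icc.2 hξ.1.le) (right_mem_Icc.2 hξ.1.le) hξ.1.le
    simp only [hslope, sub_self, exp_zero, mul_one] at hg
    have hUξ := hnonneg ξ (Ioo_subset_Icc_self hξ)
    have hcU := mul_le_mul_of_nonneg_right (le_abs_self c) hUξ
    have hWU := mul_le_mul_of_nonneg_left
      (mul_le_mul_of_nonneg_left (neg_le_of_abs_le (hWM ξ (Ioo_subset_Ico_self hξ))) hUξ) hκ
    linarith [mul_nonneg hpos.le (exp_pos (p - ξ)).le]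
  have hlim : Tendsto (fun ξ => (|c| + κ * M) * U ξ) (𝓝[<] a) (𝓝 0) := by
    have h := ((hUc a (right_mem_Icc.2 hpa.le)).mono_of_mem_nhdsWithin
      (Icc_mem_nhdsLT hpa)).tendsto.const_mul (|c| + κ * M)
    rwa [hUa, mul_zero] at h
  have hU'a : ∃ᶠ ξ in 𝓝[<] a, deriv U ξ ≤ 0 := frequently_deriv_nonpos_nhdsLT hpa hUc
    (fun x hx => (hU x (Ioo_subset_Ico_self hx)).differentiableWithinAt) hnonneg hUa
  have hfreq : ∃ᶠ ξ in 𝓝[<] a, (c - 2 - κ * W p) * U p ≤ (|c| + κ * M) * U ξ :=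
    (hU'a.and_eventually (Ioo_mem_nhdsLT hpa)).mono fun ξ ⟨hderiv, hξ⟩ =>
      (hkey ξ hξ).trans (by linarith)
  have hc := nonpos_of_mul_nonpos_left (ge_of_tendsto_of_frequently hlim hfreq) hpos
  linarith [mul_le_mul_of_nonneg_left (le_of_abs_le (hWM p ⟨le_rfl, hpa⟩)) hκ]

end Comparison

theorem ite_eq_comp_projIcc {U : ℝ → ℝ} {b a : ℝ} (hba : b ≤ a) (hb : U b = 1) (ha : U a = 0)
    (x : ℝ) : (if x ≤ b then 1 else if x < a then U x else 0) = U (projIcc b a hba x) := by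
  split_ifs with hxb hxa
  · rw [projIcc_of_le_left hba hxb, hb]
  · rw [projIcc_of_mem hba ⟨(not_le.1 hxb).le, hxa.le⟩]
  · rw [projIcc_of_right_le hba (not_lt.1 hxa), ha]

theorem differentiable_deriv_integral_Kd_mul_projIcc {d b a : ℝ} {U : ℝ → ℝ} (hd : 0 < d)
    (hba : b ≤ a) (hU : ContinuousOn U (Icc b a)) :
    Differentiable ℝ (deriv fun x => ∫ y, Kd d (x - y) * U (projIcc b a hba y)) := by
  obtain ⟨C, hC⟩ := isCompact_Icc.exists_bound_of_continuousOn hU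
  exact differentiable_deriv_integral_Kd_mul hd
    (hU.comp_continuous (continuous_subtype_val.comp continuous_projIcc)
      fun y => (projIcc b a hba y).2)
    fun y => hC _ (projIcc b a hba y).2

theorem speed_upper_bound_general (a τ χ d c θ MV : ℝ) (ha : 0 < a) (hτ : τ ∈ Set.Icc (0:ℝ) 1)
    (hχ : 0 < χ) (hd : 0 < d) (hθ : θ ∈ Set.Ioo (0:ℝ) (1/4))
    (haθ : Real.log (1 / θ) < a)
    (U Ut V : ℝ → ℝ)
    (hU : ContDiffOn ℝ 2 U (Set.Icc (-a) a))
    (hU_nonneg : ∀ x ∈ Set.Icc (-a) a, 0 ≤ U x)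
    (hUt : ∀ x, Ut x = if x ≤ -a then 1 else if x < a then U x else 0)
    (hV : ∀ x, V x = ∫ y : ℝ, Kd d (x - y) * Ut y)
    (hV' : ∀ x, |deriv V x| ≤ V x / Real.sqrt d)
    (heq : ∀ x ∈ Set.Ioo (-a) a,
      -(c * deriv U x) + τ * χ * deriv (fun y => U y * deriv V y) x
        = deriv (deriv U) x + U x * (1 - U x))
    (hbc1 : U (-a) = 1) (hbc2 : U a = 0)
    (hmax : IsGreatest (U '' Set.Icc 0 a) θ)
    (hMV : ∀ x, |V x| ≤ MV) :
    c ≤ 2 + (χ / Real.sqrt d + χ / d) * MV := by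
  have haa : -a ≤ a := by linarith
  have hUc : ContinuousOn U (Icc (-a) a) := hU.continuousOn
  have hVd : Differentiable ℝ (deriv V) := by
    rw [funext hV, funext fun y => (hUt y).trans (ite_eq_comp_projIcc haa hbc1 hbc2 y)]
    exact differentiable_deriv_integral_Kd_mul_projIcc hd haa hUc
  have hV'M : ∀ x, |deriv V x| ≤ MV / √d :=
    fun x => (hV' x).trans (by gcongr; exact (le_abs_self _).trans (hMV x))
  obtain ⟨x₀, hx₀, hUx₀⟩ := hmax.1
  have hθa : exp (-a) < U x₀ * exp x₀ := by
    have : -a < log θ := by rw [one_div, log_inv] at haθ; linarith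
    rw [hUx₀]
    exact ((lt_log_iff_exp_lt hθ.1).1 this).trans_le
      (le_mul_of_one_le_right hθ.1.le (one_le_exp hx₀.1))
  obtain ⟨p, hp, hpos, hpmax⟩ :=
    exists_touching_point hUc hbc1 hbc2 ⟨by linarith [hx₀.1], hx₀.2⟩ hθa
  have hsub : Ico p a ⊆ Ioo (-a) a := Ico_subset_Ioo_left hp.1
  have hUd : ∀ x ∈ Ioo (-a) a, DifferentiableAt ℝ U x := fun x hx =>
    (hU.contDiffAt (Icc_mem_nhds hx.1 hx.2)).differentiableAt two_ne_zero
  have hspeed : c ≤ 2 + τ * χ * (MV / √d) :=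
    speed_le_of_touching hp.2 (mul_nonneg hτ.1 hχ.le) (fun x hx => hUd x (hsub hx))
      (fun x hx => hU.differentiableAt_deriv (Icc_mem_nhds (hsub hx).1 (hsub hx).2))
      (fun x _ => hVd x) (fun x _ => hV'M x) (fun x hx => heq x (hsub hx))
      (hUc.mono (Icc_subset_Icc_left hp.1.le))
      (fun x hx => hU_nonneg x (Icc_subset_Icc_left hp.1.le hx)) hbc2 hpos
      (deriv_eq_neg_of_isLocalMax_mul_exp (hpmax.isLocalMax (Icc_mem_nhds hp.1 hp.2))
        (hUd p hp).hasDerivAt)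
      fun x hx => hpmax (Ioo_subset_Icc_self (hsub hx))
  have hMV0 : 0 ≤ MV := (abs_nonneg _).trans (hMV 0)
  have hτχ := mul_le_of_le_one_left (by positivity : 0 ≤ χ / √d * MV) hτ.2
  have hχd : 0 ≤ χ / d * MV := by positivity
  calc c ≤ 2 + τ * (χ / √d * MV) := by convert hspeed using 2; ring
    _ ≤ 2 + (χ / √d + χ / d) * MV := by linarith [add_mul (χ / √d) (χ / d) MV]

theorem speed_upper_bound (a τ χ d c θ MV : ℝ) (ha : 0 < a) (hτ : τ ∈ Set.Icc (0:ℝ) 1)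
    (hχ : 0 < χ) (hd : 0 < d) (hθ : θ ∈ Set.Ioo (0:ℝ) (1/4))
    (haθ : Real.log (1 / θ) < a)
    (U Ut V : ℝ → ℝ)
    (hU : ContDiffOn ℝ 2 U (Set.Icc (-a) a))
    (hU_nonneg : ∀ x ∈ Set.Icc (-a) a, 0 ≤ U x)
    (hUt : ∀ x, Ut x = if x ≤ -a then 1 else if x < a then U x else 0)
    (hV : ∀ x, V x = ∫ y : ℝ, Kd d (x - y) * Ut y)
    (hVeq : ∀ x, -(d * deriv (deriv V) x) = Ut x - V x)
    (hV' : ∀ x, |deriv V x| ≤ V x / Real.sqrt d)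
    (heq : ∀ x ∈ Set.Ioo (-a) a,
      -(c * deriv U x) + τ * χ * deriv (fun y => U y * deriv V y) x
        = deriv (deriv U) x + U x * (1 - U x))
    (hbc1 : U (-a) = 1) (hbc2 : U a = 0)
    (hmax : IsGreatest (U '' Set.Icc 0 a) θ)
    (hMV : ∀ x, |V x| ≤ MV) :
    c ≤ 2 + (χ / Real.sqrt d + χ / d) * MV :=
  speed_upper_bound_general a τ χ d c θ MV ha hτ hχ hd hθ haθ U Ut V hU hU_nonneg hUt hV hV' heq
    hbc1 hbc2 hmax hMV
end
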